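/- arXiv:2402.14343 — 2 statements merged into one kernel-verified Lean document; each statement's English description precedes it below -/
import Mathlib

section
/- For every integer d ≥ 1, the d-dimensional hypercube graph Q_d has edge expansion at least 1: for every nonempty proper subset S of {0,1}^d, |∂S| ≥ min(|S|, 2^d − |S|). -/
open Set Pointwise

noncomputable section

/-- The graph of a polytope `P`: vertices are the extreme points of `P`, and two distinct
extreme points are adjacent exactly when the closed segment between them is an extreme
subset (a face) of `P`. -/
def polyGraph {d : ℕ} (P : Set (Fin d → ℝ)) :
    SimpleGraph {x : Fin d → ℝ // x ∈ Set.extremePoints ℝ P} where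
  Adj u v := u ≠ v ∧ IsExtreme ℝ P (segment ℝ u.1 v.1)
  symm := by
    constructor
    rintro u v ⟨h1, h2⟩
    refine ⟨h1.symm, ?_⟩
    rwa [segment_symm]
  loopless := by constructor; rintro u ⟨h1, _⟩; exact h1 rfl

/-- The set `∂S` of edges of a graph with exactly one endpoint in `S`. -/
def edgeCut {V : Type*} (G : SimpleGraph V) (S : Set V) : Set (Sym2 V) :=
  {e | e ∈ G.edgeSet ∧ ∃ u v, u ∈ S ∧ v ∉ S ∧ e = s(u, v)}

/-- The `d`-dimensional hypercube graph on vertex set `{0,1}^d`: two vertices are adjacent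
exactly when they differ in exactly one coordinate. -/
def cubeGraph (d : ℕ) : SimpleGraph (Fin d → Bool) where
  Adj x y := {i | x i ≠ y i}.ncard = 1
  symm := by
    constructor
    intro x y h
    have hxy : {i | y i ≠ x i} = {i | x i ≠ y i} := by ext i; simp [ne_comm]
    simpa [hxy] using h
  loopless := by constructor; intro x h; simp at h


/-!
Canonical paths. For `s ∈ S` and `t ∉ S`, walk from `s` to `t` fixing one coordinate at a time,
left to right; the walk leaves `S` along an edge of `∂S`. If that edge flips coordinate `k`, the
pair `(s, t)` is recovered from the edge together with the first `k` coordinates of `s` and the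
last `d - k - 1` coordinates of `t`, so each edge carries at most `2 ^ (d - 1)` pairs. Hence
`2 |S| |Sᶜ| ≤ 2 ^ d |∂S| = (|S| + |Sᶜ|) |∂S|`, which forces `min |S| |Sᶜ| ≤ |∂S|`.
-/

theorem Nat.min_le_of_two_mul_mul_le {a b c : ℕ} (h : 2 * (a * b) ≤ (a + b) * c) :
    min a b ≤ c := by
  rcases le_total a b with hab | hab
  · rw [min_eq_left hab]; nlinarith
  · rw [min_eq_right hab]; nlinarith

theorem Set.ncard_setOf_apply_eq {ι κ : Type*} [Fintype ι] [Fintype κ] (i : ι) (x : κ) :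
    {f : ι → κ | f i = x}.ncard = Fintype.card κ ^ (Fintype.card ι - 1) := by
  classical
  have := Fintype.card_filter_piFinset_const_eq_of_mem Finset.univ i (Finset.mem_univ x)
  rw [Fintype.piFinset_univ, Finset.card_univ] at this
  rw [← this, ← Set.ncard_coe_finset]
  simp

namespace SimpleGraph

variable {V : Type*} [Finite V] (G : SimpleGraph V) (S : Set V)

theorem mul_ncard_mul_ncard_compl_le (route : V → V → Sym2 V) {n m : ℕ}
    (route_mem : ∀ s ∈ S, ∀ t ∉ S, route s t ∈ edgeCut G S)
    (load_le : ∀ e, n * {p : V × V | p.1 ∈ S ∧ p.2 ∉ S ∧ route p.1 p.2 = e}.ncard ≤ m) :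
    n * (S.ncard * Sᶜ.ncard) ≤ m * (edgeCut G S).ncard := by
  classical
  have := Fintype.ofFinite V
  set A := S.toFinset ×ˢ Sᶜ.toFinset
  have hA : S.ncard * Sᶜ.ncard = A.card := by
    simp [A, Set.ncard_eq_toFinset_card']
  have hfiber : ∀ e, {p : V × V | p.1 ∈ S ∧ p.2 ∉ S ∧ route p.1 p.2 = e}.ncard =
      (A.filter fun p ↦ route p.1 p.2 = e).card := by
    intro e
    rw [← Set.ncard_coe_finset]
    congr 1
    ext p
    simp [A, and_assoc]
  have hmaps : ∀ p ∈ A, route p.1 p.2 ∈ (edgeCut G S).toFinset := by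
    intro p hp
    simp only [A, Finset.mem_product, Set.mem_toFinset, Set.mem_compl_iff] at hp
    simpa using route_mem _ hp.1 _ hp.2
  calc n * (S.ncard * Sᶜ.ncard)
      = ∑ e ∈ (edgeCut G S).toFinset, n * (A.filter fun p ↦ route p.1 p.2 = e).card := by
        rw [hA, Finset.card_eq_sum_card_fiberwise hmaps, Finset.mul_sum]
    _ ≤ ∑ _e ∈ (edgeCut G S).toFinset, m :=
        Finset.sum_le_sum fun e _ ↦ hfiber e ▸ load_le e
    _ = m * (edgeCut G S).ncard := by
        rw [Finset.sum_const, smul_eq_mul, mul_comm, Set.ncard_eq_toFinset_card']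

end SimpleGraph

namespace cubeGraph

open Function

variable {d : ℕ}

theorem adj_update {x : Fin d → Bool} {i : Fin d} {b : Bool} (h : x i ≠ b) :
    (cubeGraph d).Adj x (update x i b) := by
  change {j | x j ≠ update x i b j}.ncard = 1
  have : {j | x j ≠ update x i b j} = {i} := by
    ext j
    rcases eq_or_ne j i with rfl | hj <;> simp [*]
  rw [this, Set.ncard_singleton]

def bitFixingPath (u v : Fin d → Bool) (k : ℕ) : Fin d → Bool :=
  fun i ↦ if (i : ℕ) < k then v i else u i

@[simp]
theorem bitFixingPath_zero (u v : Fin d → Bool) : bitFixingPath u v 0 = u := by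
  funext i; simp [bitFixingPath]

theorem bitFixingPath_of_le (u v : Fin d → Bool) {k : ℕ} (hk : d ≤ k) :
    bitFixingPath u v k = v := by
  funext i; simp [bitFixingPath, i.isLt.trans_le hk]

theorem bitFixingPath_succ (u v : Fin d → Bool) {k : ℕ} (hk : k < d) :
    bitFixingPath u v (k + 1) = update (bitFixingPath u v k) ⟨k, hk⟩ (v ⟨k, hk⟩) := by
  funext i
  rcases eq_or_ne i ⟨k, hk⟩ with rfl | hi
  · simp [bitFixingPath]
  · have : (i : ℕ) ≠ k := fun h ↦ hi (Fin.ext h)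
    simp only [bitFixingPath, update_of_ne hi]
    grind

theorem bitFixingPath_bitFixingPath (u v : Fin d → Bool) (k : ℕ) :
    bitFixingPath (bitFixingPath u v k) (bitFixingPath v u k) k = u := by
  funext i; by_cases h : (i : ℕ) < k <;> simp [bitFixingPath, h]

variable (S : Set (Fin d → Bool))

def exitIndex (u v : Fin d → Bool) : ℕ :=
  sInf {k | bitFixingPath u v (k + 1) ∉ S}

variable {S} {u v : Fin d → Bool}

theorem exitIndex_spec (hu : u ∈ S) (hv : v ∉ S) :
    exitIndex S u v < d ∧ bitFixingPath u v (exitIndex S u v) ∈ S ∧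
      bitFixingPath u v (exitIndex S u v + 1) ∉ S := by
  have hne : {k | bitFixingPath u v (k + 1) ∉ S}.Nonempty :=
    ⟨d, by simpa [bitFixingPath_of_le u v (Nat.le_succ d)] using hv⟩
  have hexit : bitFixingPath u v (exitIndex S u v + 1) ∉ S := Nat.sInf_mem hne
  have hin : bitFixingPath u v (exitIndex S u v) ∈ S := by
    rcases hk : exitIndex S u v with _ | k
    · simpa using hu
    · have := Nat.notMem_of_lt_sInf (s := {k | bitFixingPath u v (k + 1) ∉ S})
        (m := k) (by rw [← exitIndex, hk]; exact Nat.lt_succ_self k)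
      simpa using this
  refine ⟨?_, hin, hexit⟩
  by_contra! hd
  exact hv (bitFixingPath_of_le u v hd ▸ hin)

variable (S) in
def exitEdge (u v : Fin d → Bool) : Sym2 (Fin d → Bool) :=
  s(bitFixingPath u v (exitIndex S u v), bitFixingPath u v (exitIndex S u v + 1))

theorem update_exitIndex_ne (hu : u ∈ S) (hv : v ∉ S) (hk : exitIndex S u v < d) :
    update (bitFixingPath u v (exitIndex S u v)) ⟨_, hk⟩ (v ⟨_, hk⟩) ≠
      bitFixingPath u v (exitIndex S u v) := by
  obtain ⟨-, hin, hout⟩ := exitIndex_spec hu hv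
  rw [← bitFixingPath_succ]
  exact fun h ↦ hout (h ▸ hin)

theorem exitEdge_mem_edgeCut (hu : u ∈ S) (hv : v ∉ S) :
    exitEdge S u v ∈ edgeCut (cubeGraph d) S := by
  obtain ⟨hk, hin, hout⟩ := exitIndex_spec hu hv
  refine ⟨?_, _, _, hin, hout, rfl⟩
  rw [exitEdge, SimpleGraph.mem_edgeSet, bitFixingPath_succ u v hk]
  exact adj_update fun h ↦ update_exitIndex_ne hu hv hk (h ▸ update_eq_self _ _)

theorem eq_of_exitEdge_eq {u' v' : Fin d → Bool} (hu : u ∈ S) (hv : v ∉ S) (hu' : u' ∈ S)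
    (hv' : v' ∉ S) (h : exitEdge S u v = exitEdge S u' v') :
    exitIndex S u v = exitIndex S u' v' ∧
      bitFixingPath u v (exitIndex S u v) = bitFixingPath u' v' (exitIndex S u' v') ∧
      bitFixingPath u v (exitIndex S u v + 1) = bitFixingPath u' v' (exitIndex S u' v' + 1) := by
  obtain ⟨hk, hin, -⟩ := exitIndex_spec hu hv
  obtain ⟨hk', -, hout'⟩ := exitIndex_spec hu' hv'
  obtain ⟨ha, hb⟩ := (Sym2.eq_iff.1 h).resolve_right fun h ↦ hout' (h.1 ▸ hin)
  refine ⟨?_, ha, hb⟩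
  by_contra hne
  have hne' : (⟨_, hk⟩ : Fin d) ≠ ⟨_, hk'⟩ := Fin.ne_of_val_ne hne
  have hb_at := congrFun hb ⟨_, hk⟩
  rw [bitFixingPath_succ _ _ hk, bitFixingPath_succ _ _ hk', ← ha, update_of_ne hne',
    update_self] at hb_at
  exact update_exitIndex_ne hu hv hk (hb_at ▸ update_eq_self _ _)

variable (S) in
theorem two_mul_ncard_exitEdge_fiber_le (e : Sym2 (Fin d → Bool)) :
    2 * {p : (Fin d → Bool) × (Fin d → Bool) | p.1 ∈ S ∧ p.2 ∉ S ∧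
      exitEdge S p.1 p.2 = e}.ncard ≤ 2 ^ d := by
  set F := {p : (Fin d → Bool) × (Fin d → Bool) | p.1 ∈ S ∧ p.2 ∉ S ∧ exitEdge S p.1 p.2 = e}
  rcases F.eq_empty_or_nonempty with hF | ⟨⟨u, v⟩, hu, hv, he⟩
  · simp [hF]
  dsimp only at hu hv he
  obtain ⟨hk, -, -⟩ := exitIndex_spec hu hv
  set k := exitIndex S u v
  have hF : ∀ p ∈ F, exitIndex S p.1 p.2 = k ∧ bitFixingPath p.1 p.2 k = bitFixingPath u v k ∧
      bitFixingPath p.1 p.2 (k + 1) = bitFixingPath u v (k + 1) := by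
    rintro p ⟨hp₁, hp₂, hpe⟩
    obtain ⟨hpk, ha, hb⟩ := eq_of_exitEdge_eq hp₁ hp₂ hu hv (hpe.trans he.symm)
    rw [hpk] at ha hb
    exact ⟨hpk, ha, hb⟩
  have hmaps : ∀ p ∈ F, bitFixingPath p.2 p.1 k ∈ {c | c ⟨k, hk⟩ = v ⟨k, hk⟩} := by
    intro p hp
    simpa [bitFixingPath] using congrFun (hF p hp).2.2 ⟨k, hk⟩
  have hinj : Set.InjOn (fun p ↦ bitFixingPath p.2 p.1 k) F := by
    intro p hp q hq hpq
    have hp₁ := bitFixingPath_bitFixingPath p.1 p.2 k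
    have hp₂ := bitFixingPath_bitFixingPath p.2 p.1 k
    have hq₁ := bitFixingPath_bitFixingPath q.1 q.2 k
    have hq₂ := bitFixingPath_bitFixingPath q.2 q.1 k
    rw [(hF p hp).2.1] at hp₁ hp₂
    rw [(hF q hq).2.1] at hq₁ hq₂
    simp only at hpq
    rw [hpq] at hp₁ hp₂
    exact Prod.ext (hp₁.symm.trans hq₁) (hp₂.symm.trans hq₂)
  calc 2 * F.ncard ≤ 2 * {c : Fin d → Bool | c ⟨k, hk⟩ = v ⟨k, hk⟩}.ncard :=
        Nat.mul_le_mul_left 2 (Set.ncard_le_ncard_of_injOn _ hmaps hinj)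
    _ = 2 ^ d := by
        rw [Set.ncard_setOf_apply_eq, Fintype.card_bool, Fintype.card_fin, ← pow_succ']
        congr 1
        omega

end cubeGraph

theorem cubeGraph_expansion_general (d : ℕ) (S : Set (Fin d → Bool)) :
    min S.ncard (Sᶜ).ncard ≤ (edgeCut (cubeGraph d) S).ncard := by
  apply Nat.min_le_of_two_mul_mul_le
  have hcard : S.ncard + Sᶜ.ncard = 2 ^ d := by
    rw [Set.ncard_add_ncard_compl, Nat.card_eq_fintype_card, Fintype.card_pi]
    simp
  rw [hcard]
  exact (cubeGraph d).mul_ncard_mul_ncard_compl_le S (cubeGraph.exitEdge S)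
    (fun _ hu _ hv ↦ cubeGraph.exitEdge_mem_edgeCut hu hv)
    (cubeGraph.two_mul_ncard_exitEdge_fiber_le S)

/-- For every `d ≥ 1`, the `d`-dimensional hypercube graph has edge expansion at least
`1`: for every nonempty proper subset `S` of `{0,1}^d`, `|∂S| ≥ min(|S|, 2^d − |S|)`. -/
theorem cubeGraph_expansion (d : ℕ) (hd : 1 ≤ d) (S : Set (Fin d → Bool))
    (hS : S.Nonempty) (hS' : Sᶜ.Nonempty) :
    min S.ncard (Sᶜ).ncard ≤ (edgeCut (cubeGraph d) S).ncard :=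
  cubeGraph_expansion_general d S
end
end

section
/- Let G and H be finite simple graphs, each with at least one vertex, and let ρ_G, ρ_H > 0 be such that G has congestion at most ρ_G and H has congestion at most ρ_H. Then the Cartesian (box) product G □ H has congestion at most max(ρ_G, ρ_H). -/
open Set Pointwise

noncomputable section

open scoped Classical in
/-- The number of times a walk traverses the vertex `u` immediately followed by `v`. -/
noncomputable def dartCount {V : Type*} {G : SimpleGraph V} {s t : V}
    (p : G.Walk s t) (u v : V) : ℕ :=
  (p.darts.filter (fun dr => dr.toProd = (u, v))).length

/-- A routing of a graph `G`: for each ordered pair `(s,t)` of distinct vertices, a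
finitely supported weight function with nonnegative values summing to `1` on the walks
from `s` to `t`. -/
def IsRouting {V : Type*} (G : SimpleGraph V)
    (w : ∀ s t : V, G.Walk s t → ℝ) : Prop :=
  ∀ s t : V, s ≠ t →
    (∀ p, 0 ≤ w s t p) ∧ {p | w s t p ≠ 0}.Finite ∧ ∑ᶠ p, w s t p = 1

/-- The flow of a routing through an ordered pair `(u,v)`: the sum over all ordered pairs
`(s,t)` of distinct vertices and all walks `p` from `s` to `t` of the weight of `p` times
the number of times `p` traverses `u` immediately followed by `v`. -/
noncomputable def routingFlow {V : Type*} (G : SimpleGraph V)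
    (w : ∀ s t : V, G.Walk s t → ℝ) (u v : V) : ℝ :=
  ∑ᶠ s, ∑ᶠ t, ∑ᶠ _ : s ≠ t, ∑ᶠ p : G.Walk s t, w s t p * (dartCount p u v : ℝ)

/-- A finite graph `G` has congestion at most `ρ` when it admits a routing whose flow
through every ordered pair of adjacent vertices is at most `ρ·|V|`. -/
def HasCongestionAtMost {V : Type*} [Fintype V] (G : SimpleGraph V) (ρ : ℝ) : Prop :=
  ∃ w : ∀ s t : V, G.Walk s t → ℝ, IsRouting G w ∧
    ∀ u v : V, G.Adj u v → routingFlow G w u v ≤ ρ * Fintype.card V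

/-!
Route a pair `(s₁, s₂) → (t₁, t₂)` of `G □ H` by a walk of `G` from `s₁` to `t₁` inside the
row `s₂`, followed by a walk of `H` from `s₂` to `t₂` inside the column `t₁`, the two walks drawn
independently from the given routings. A `G`-dart `(a, y) → (b, y)` is then loaded only by the
pairs with source row `s₂ = y`, and such a pair loads it exactly as the `G`-routing of
`s₁ → t₁` loads `a → b`. The free choice of `t₂` makes the total `|W|` times the flow of `G`
through `a → b`, at most `ρ_G |V| |W|`. The `H`-darts are symmetric, with the target column in
place of the source row.
-/

open SimpleGraph Function

section Weights

variable {X Y Z : Type*}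

def IsFinDistrib (e : X → ℝ) : Prop :=
  (∀ x, 0 ≤ e x) ∧ (support e).Finite ∧ ∑ᶠ x, e x = 1

open scoped Classical in
def pushforwardWeights (ψ : X → Z) (e : X → ℝ) (z : Z) : ℝ :=
  ∑ᶠ x, if ψ x = z then e x else 0

lemma finsum_pushforwardWeights_mul {e : X → ℝ} (he : (support e).Finite) (ψ : X → Z)
    (h : Z → ℝ) :
    ∑ᶠ z, pushforwardWeights ψ e z * h z = ∑ᶠ x, e x * h (ψ x) := by
  classical
  set S := he.toFinset
  have hS : ∀ x, e x ≠ 0 → x ∈ S := fun x hx => he.mem_toFinset.2 hx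
  have hpush : ∀ z, pushforwardWeights ψ e z = ∑ x ∈ S, if ψ x = z then e x else 0 := by
    refine fun z => finsum_eq_sum_of_support_subset _ fun x hx => hS x ?_
    contrapose! hx
    simp [hx]
  rw [finsum_eq_sum_of_support_subset _ (s := S.image ψ),
    finsum_eq_sum_of_support_subset _ (s := S)]
  · simp_rw [hpush, Finset.sum_mul, ite_mul, zero_mul]
    rw [Finset.sum_comm]
    exact Finset.sum_congr rfl fun x hx => by
      rw [Finset.sum_ite_eq, if_pos (Finset.mem_image_of_mem ψ hx)]
  · exact fun x hx => hS x (left_ne_zero_of_mul hx)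
  · intro z hz
    obtain ⟨x, hxS, hxz⟩ := Finset.exists_ne_zero_of_sum_ne_zero
      (by simpa [hpush, Finset.sum_mul] using hz)
    simp only [Finset.coe_image]
    exact ⟨x, hxS, by by_contra h; simp [h] at hxz⟩

lemma finite_support_pushforwardWeights {e : X → ℝ} (he : (support e).Finite) (ψ : X → Z) :
    (support (pushforwardWeights ψ e)).Finite := by
  refine (he.image ψ).subset fun z hz => ?_
  by_contra h
  refine hz (finsum_eq_zero_of_forall_eq_zero fun x => ?_)
  split_ifs with hx
  · exact notMem_support.1 fun hx' => h ⟨x, hx', hx⟩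
  · rfl

lemma IsFinDistrib.pushforwardWeights {e : X → ℝ} (he : IsFinDistrib e) (ψ : X → Z) :
    IsFinDistrib (pushforwardWeights ψ e) := by
  refine ⟨fun z => finsum_nonneg fun x => ?_, finite_support_pushforwardWeights he.2.1 ψ, ?_⟩
  · split_ifs
    exacts [he.1 x, le_rfl]
  · simpa [he.2.2] using finsum_pushforwardWeights_mul he.2.1 ψ 1

lemma finsum_prod_mul {e : X → ℝ} {f : Y → ℝ} (he : (support e).Finite)
    (hf : (support f).Finite) (c : X → Y → ℝ) :
    ∑ᶠ xy : X × Y, e xy.1 * f xy.2 * c xy.1 xy.2 = ∑ᶠ x, ∑ᶠ y, e x * f y * c x y :=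
  finsum_curry _ <| (he.prod hf).subset fun _ hxy =>
    ⟨left_ne_zero_of_mul (left_ne_zero_of_mul hxy), right_ne_zero_of_mul (left_ne_zero_of_mul hxy)⟩

lemma IsFinDistrib.prod {e : X → ℝ} {f : Y → ℝ} (he : IsFinDistrib e) (hf : IsFinDistrib f) :
    IsFinDistrib fun xy : X × Y => e xy.1 * f xy.2 := by
  refine ⟨fun xy => mul_nonneg (he.1 _) (hf.1 _),
    (he.2.1.prod hf.2.1).subset fun xy hxy => ?_, ?_⟩
  · exact ⟨left_ne_zero_of_mul hxy, right_ne_zero_of_mul hxy⟩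
  · simpa [← mul_finsum, ← finsum_mul, he.2.2, hf.2.2] using
      finsum_prod_mul he.2.1 hf.2.1 fun _ _ => 1

lemma finsum_prod_mul_left {e : X → ℝ} {f : Y → ℝ} (he : (support e).Finite)
    (hf : IsFinDistrib f) (c : X → ℝ) :
    ∑ᶠ xy : X × Y, e xy.1 * f xy.2 * c xy.1 = ∑ᶠ x, e x * c x := by
  rw [finsum_prod_mul he hf.2.1 fun x _ => c x]
  refine finsum_congr fun x => ?_
  rw [← finsum_mul, ← mul_finsum, hf.2.2, mul_one]

lemma finsum_prod_mul_right {e : X → ℝ} {f : Y → ℝ} (he : IsFinDistrib e)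
    (hf : (support f).Finite) (c : Y → ℝ) :
    ∑ᶠ xy : X × Y, e xy.1 * f xy.2 * c xy.2 = ∑ᶠ y, f y * c y := by
  simp_rw [finsum_prod_mul he.2.1 hf fun _ y => c y, mul_assoc, ← mul_finsum, ← finsum_mul,
    he.2.2, one_mul]

end Weights

section DartCount

variable {V V' W : Type*} {G : SimpleGraph V} {G' : SimpleGraph V'} {H : SimpleGraph W}

lemma dartCount_append {s t r : V} (p : G.Walk s t) (q : G.Walk t r) (a b : V) :
    dartCount (p.append q) a b = dartCount p a b + dartCount q a b := by
  simp [dartCount, Walk.darts_append, List.filter_append]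

lemma dartCount_map_apply (f : G →g G') (hf : Injective f) {s t : V} (p : G.Walk s t)
    (a b : V) : dartCount (p.map f) (f a) (f b) = dartCount p a b := by
  simp only [dartCount, Walk.darts_map, List.filter_map, List.length_map]
  congr 1
  exact List.filter_congr fun d _ =>
    decide_eq_decide.2 ((hf.prodMap hf).eq_iff (a := d.toProd) (b := (a, b)))

lemma dartCount_map_eq_zero (f : G →g G') {s t : V} (p : G.Walk s t) {a' b' : V'}
    (h : ∀ a b, f a = a' → f b = b' → False) : dartCount (p.map f) a' b' = 0 := by
  simp only [dartCount, Walk.darts_map, List.filter_map, List.length_map,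
    List.length_eq_zero_iff, List.filter_eq_nil_iff]
  intro d _ hd
  simp only [Function.comp_apply, decide_eq_true_eq] at hd
  exact h _ _ (congrArg Prod.fst hd) (congrArg Prod.snd hd)

open scoped Classical in
lemma dartCount_boxProdLeft {s t : V} (c : W) (p : G.Walk s t) (a b : V) (y y' : W) :
    dartCount (p.boxProdLeft H c) (a, y) (b, y') =
      if y = c ∧ y' = c then dartCount p a b else 0 := by
  split_ifs with h
  · obtain ⟨rfl, rfl⟩ := h
    exact dartCount_map_apply _ (G.boxProdLeft H _).injective p a b
  · refine dartCount_map_eq_zero _ p fun _ _ ha hb => h ?_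
    simp only [Embedding.coe_toHom, boxProdLeft_apply, Prod.mk.injEq] at ha hb
    exact ⟨ha.2.symm, hb.2.symm⟩

open scoped Classical in
lemma dartCount_boxProdRight {s t : W} (c : V) (q : H.Walk s t) (x x' : V) (a b : W) :
    dartCount (q.boxProdRight G c) (x, a) (x', b) =
      if x = c ∧ x' = c then dartCount q a b else 0 := by
  split_ifs with h
  · obtain ⟨rfl, rfl⟩ := h
    exact dartCount_map_apply _ (G.boxProdRight H _).injective q a b
  · refine dartCount_map_eq_zero _ q fun _ _ ha hb => h ?_
    simp only [Embedding.coe_toHom, boxProdRight_apply, Prod.mk.injEq] at ha hb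
    exact ⟨ha.1.symm, hb.1.symm⟩

end DartCount

section Routing

variable {V : Type*} {G : SimpleGraph V}

def walkFlow {s t : V} (e : G.Walk s t → ℝ) (a b : V) : ℝ :=
  ∑ᶠ p, e p * dartCount p a b

-- `routingFlow` ignores diagonal pairs, so giving them the empty walk changes no flow.
open scoped Classical in
def extendByNil (w : ∀ s t : V, G.Walk s t → ℝ) (s t : V) (p : G.Walk s t) : ℝ :=
  if s = t then (if p.Nil then 1 else 0) else w s t p

lemma extendByNil_of_ne (w : ∀ s t : V, G.Walk s t → ℝ) {s t : V} (h : s ≠ t) :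
    extendByNil w s t = w s t :=
  funext fun _ => if_neg h

lemma IsRouting.isFinDistrib_extendByNil {w : ∀ s t : V, G.Walk s t → ℝ} (hw : IsRouting G w)
    (s t : V) : IsFinDistrib (extendByNil w s t) := by
  by_cases h : s = t
  · subst h
    have hsingle : ∀ p : G.Walk s s, p ≠ .nil → extendByNil w s s p = 0 := fun p hp => by
      simp [extendByNil, ← Walk.eq_nil_iff_nil, hp]
    refine ⟨fun p => ?_, (finite_singleton Walk.nil).subset fun p hp => ?_, ?_⟩
    · simp only [extendByNil]
      split_ifs <;> norm_num
    · by_contra h'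
      exact hp (hsingle p h')
    · rw [finsum_eq_single _ _ hsingle]
      simp [extendByNil]
  · rw [extendByNil_of_ne w h]
    exact hw s t h

lemma walkFlow_extendByNil_self (w : ∀ s t : V, G.Walk s t → ℝ) (s a b : V) :
    walkFlow (extendByNil w s s) a b = 0 := by
  refine finsum_eq_zero_of_forall_eq_zero fun p => ?_
  by_cases hp : p.Nil
  · rw [Walk.eq_nil_iff_nil.2 hp]
    simp [dartCount]
  · simp [extendByNil, hp]

lemma routingFlow_extendByNil (w : ∀ s t : V, G.Walk s t → ℝ) (a b : V) :
    routingFlow G (extendByNil w) a b = routingFlow G w a b := by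
  unfold routingFlow
  congr! 5 with s t hst
  rw [extendByNil_of_ne w hst]

lemma routingFlow_eq_sum_walkFlow [Fintype V] (w : ∀ s t : V, G.Walk s t → ℝ) (a b : V)
    (hdiag : ∀ s, walkFlow (w s s) a b = 0) :
    routingFlow G w a b = ∑ s, ∑ t, walkFlow (w s t) a b := by
  classical
  simp only [routingFlow, finsum_eq_sum_of_fintype]
  refine Finset.sum_congr rfl fun s _ => Finset.sum_congr rfl fun t _ => ?_
  rw [finsum_eq_if]
  split_ifs with h
  · rfl
  · rw [not_not.1 h, hdiag]

end Routing

section BoxProd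

open scoped Classical

variable {V W : Type*} {G : SimpleGraph V} {H : SimpleGraph W}

def boxProdWalk {s₁ t₁ : V} {s₂ t₂ : W} (p : G.Walk s₁ t₁) (q : H.Walk s₂ t₂) :
    (G □ H).Walk (s₁, s₂) (t₁, t₂) :=
  (p.boxProdLeft H s₂).append (q.boxProdRight G t₁)

lemma dartCount_boxProdWalk_left {s₁ t₁ a b : V} {s₂ t₂ : W} (p : G.Walk s₁ t₁)
    (q : H.Walk s₂ t₂) (hab : a ≠ b) (y : W) :
    dartCount (boxProdWalk p q) (a, y) (b, y) = if y = s₂ then dartCount p a b else 0 := by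
  have : ¬(a = t₁ ∧ b = t₁) := fun h => hab (h.1.trans h.2.symm)
  simp [boxProdWalk, dartCount_append, dartCount_boxProdLeft, dartCount_boxProdRight, this]

lemma dartCount_boxProdWalk_right {s₁ t₁ : V} {s₂ t₂ a b : W} (p : G.Walk s₁ t₁)
    (q : H.Walk s₂ t₂) (hab : a ≠ b) (x : V) :
    dartCount (boxProdWalk p q) (x, a) (x, b) = if x = t₁ then dartCount q a b else 0 := by
  have : ¬(a = s₂ ∧ b = s₂) := fun h => hab (h.1.trans h.2.symm)
  simp [boxProdWalk, dartCount_append, dartCount_boxProdLeft, dartCount_boxProdRight, this]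

variable (wG : ∀ s t : V, G.Walk s t → ℝ) (wH : ∀ s t : W, H.Walk s t → ℝ)

def boxProdRouting (s t : V × W) : (G □ H).Walk s t → ℝ :=
  pushforwardWeights (fun pq : G.Walk s.1 t.1 × H.Walk s.2 t.2 => boxProdWalk pq.1 pq.2)
    fun pq => extendByNil wG s.1 t.1 pq.1 * extendByNil wH s.2 t.2 pq.2

variable {wG wH}

lemma isRouting_boxProdRouting (hG : IsRouting G wG) (hH : IsRouting H wH) :
    IsRouting (G □ H) (boxProdRouting wG wH) := fun _ _ _ =>
  ((hG.isFinDistrib_extendByNil _ _).prod (hH.isFinDistrib_extendByNil _ _)).pushforwardWeights _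

lemma walkFlow_boxProdRouting_left (hG : IsRouting G wG) (hH : IsRouting H wH) {a b : V}
    (hab : a ≠ b) (y : W) (s t : V × W) :
    walkFlow (boxProdRouting wG wH s t) (a, y) (b, y) =
      if y = s.2 then walkFlow (extendByNil wG s.1 t.1) a b else 0 := by
  have hGst := hG.isFinDistrib_extendByNil s.1 t.1
  have hHst := hH.isFinDistrib_extendByNil s.2 t.2
  rw [walkFlow, boxProdRouting, finsum_pushforwardWeights_mul (hGst.prod hHst).2.1]
  simp_rw [dartCount_boxProdWalk_left _ _ hab]
  rw [finsum_prod_mul_left hGst.2.1 hHst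
    fun p => ((if y = s.2 then dartCount p a b else 0 : ℕ) : ℝ)]
  split_ifs <;> simp [walkFlow]

lemma walkFlow_boxProdRouting_right (hG : IsRouting G wG) (hH : IsRouting H wH) {a b : W}
    (hab : a ≠ b) (x : V) (s t : V × W) :
    walkFlow (boxProdRouting wG wH s t) (x, a) (x, b) =
      if x = t.1 then walkFlow (extendByNil wH s.2 t.2) a b else 0 := by
  have hGst := hG.isFinDistrib_extendByNil s.1 t.1
  have hHst := hH.isFinDistrib_extendByNil s.2 t.2
  rw [walkFlow, boxProdRouting, finsum_pushforwardWeights_mul (hGst.prod hHst).2.1]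
  simp_rw [dartCount_boxProdWalk_right _ _ hab]
  rw [finsum_prod_mul_right hGst hHst.2.1
    fun q => ((if x = t.1 then dartCount q a b else 0 : ℕ) : ℝ)]
  split_ifs <;> simp [walkFlow]

lemma routingFlow_boxProdRouting_left [Fintype V] [Fintype W] (hG : IsRouting G wG)
    (hH : IsRouting H wH) {a b : V} (hab : a ≠ b) (y : W) :
    routingFlow (G □ H) (boxProdRouting wG wH) (a, y) (b, y) =
      Fintype.card W * routingFlow G wG a b := by
  rw [← routingFlow_extendByNil wG, routingFlow_eq_sum_walkFlow _ _ _
      (walkFlow_extendByNil_self wG · a b),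
    routingFlow_eq_sum_walkFlow _ _ _ fun s => by
      simp [walkFlow_boxProdRouting_left hG hH hab, walkFlow_extendByNil_self]]
  simp [walkFlow_boxProdRouting_left hG hH hab, Fintype.sum_prod_type, Finset.mul_sum]

lemma routingFlow_boxProdRouting_right [Fintype V] [Fintype W] (hG : IsRouting G wG)
    (hH : IsRouting H wH) {a b : W} (hab : a ≠ b) (x : V) :
    routingFlow (G □ H) (boxProdRouting wG wH) (x, a) (x, b) =
      Fintype.card V * routingFlow H wH a b := by
  rw [← routingFlow_extendByNil wH, routingFlow_eq_sum_walkFlow _ _ _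
      (walkFlow_extendByNil_self wH · a b),
    routingFlow_eq_sum_walkFlow _ _ _ fun s => by
      simp [walkFlow_boxProdRouting_right hG hH hab, walkFlow_extendByNil_self]]
  simp [walkFlow_boxProdRouting_right hG hH hab, Fintype.sum_prod_type, Finset.mul_sum]

end BoxProd

theorem boxProd_congestion_general {V W : Type*} [Fintype V] [Fintype W]
    (G : SimpleGraph V) (H : SimpleGraph W)
    (ρG ρH : ℝ)
    (hG : HasCongestionAtMost G ρG) (hH : HasCongestionAtMost H ρH) :
    HasCongestionAtMost (G □ H) (max ρG ρH) := by
  obtain ⟨wG, hwG, hflowG⟩ := hG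
  obtain ⟨wH, hwH, hflowH⟩ := hH
  refine ⟨boxProdRouting wG wH, isRouting_boxProdRouting hwG hwH, ?_⟩
  rintro ⟨a, y⟩ ⟨b, y'⟩ hadj
  rw [Fintype.card_prod, Nat.cast_mul]
  rcases boxProd_adj.1 hadj with ⟨hab, rfl : y = y'⟩ | ⟨hyy', rfl : a = b⟩
  · rw [routingFlow_boxProdRouting_left hwG hwH hab.ne]
    calc (Fintype.card W : ℝ) * routingFlow G wG a b
        ≤ Fintype.card W * (ρG * Fintype.card V) := by gcongr; exact hflowG a b hab
      _ = ρG * (Fintype.card V * Fintype.card W) := by ring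
      _ ≤ max ρG ρH * (Fintype.card V * Fintype.card W) := by gcongr; exact le_max_left ..
  · rw [routingFlow_boxProdRouting_right hwG hwH hyy'.ne]
    calc (Fintype.card V : ℝ) * routingFlow H wH y y'
        ≤ Fintype.card V * (ρH * Fintype.card W) := by gcongr; exact hflowH y y' hyy'
      _ = ρH * (Fintype.card V * Fintype.card W) := by ring
      _ ≤ max ρG ρH * (Fintype.card V * Fintype.card W) := by gcongr; exact le_max_right ..

/-- If `G` has congestion at most `ρ_G` and `H` has congestion at most `ρ_H`, then the
Cartesian (box) product `G □ H` has congestion at most `max ρ_G ρ_H`. -/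
theorem boxProd_congestion {V W : Type*} [Fintype V] [Fintype W]
    [Nonempty V] [Nonempty W] (G : SimpleGraph V) (H : SimpleGraph W)
    (ρG ρH : ℝ) (hρG : 0 < ρG) (hρH : 0 < ρH)
    (hG : HasCongestionAtMost G ρG) (hH : HasCongestionAtMost H ρH) :
    HasCongestionAtMost (G □ H) (max ρG ρH) :=
  boxProd_congestion_general G H ρG ρH hG hH
end
end
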